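/- With the above data, for every s ≥ 2 the following identity holds in M: s_1 ∘ s_2 ∘ ⋯ ∘ s_{s−1}(ν_s) = ν_s + Σ_{i=1}^{s−1} b_i ν_i, where b_i = Σ (−1)^m a_{i_0,i_1} a_{i_1,i_2} ⋯ a_{i_{m−1},i_m}, the sum over all chains i = i_0 < i_1 < ⋯ < i_m = s with m ≥ 1. (Applied to sequences of simple roots, this expresses the roots β_j = s_{μ_1}⋯s_{μ_{j−1}}μ_j in terms of Cartan numbers, and is the key identity relating the combinatorial data of a Bott tower to that of the corresponding Bott–Samelson variety.) -/

import Mathlib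

/-!
Write `l` for the last index. Splitting a chain `i < i_1 < ⋯ < l` after its first step gives the
recursion `b_i = -a_{i,l} - Σ_{i<x<l} a_{i,x} b_x`, and this is exactly the coefficient of `ν_i`
that `s_i` creates when applied to `ν_l + Σ_{i<x<l} b_x ν_x`; so the reflections can be peeled
off from the inside out, `s_i ∘ ⋯ ∘ s_{l-1}(ν_l) = ν_l + Σ_{i≤x<l} b_x ν_x`.
-/

def pathProdR {R : Type*} [CommRing R] {S : ℕ} (a : Fin S → Fin S → R) :
    List (Fin S) → R
  | [] => 1
  | [_] => 1
  | i :: j :: t => a i j * pathProdR a (j :: t)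

/-- `b_i = Σ (−1)^m a_{i_0,i_1}a_{i_1,i_2}⋯a_{i_{m−1},i_m}`, the sum over all chains
`i = i_0 < i_1 < ⋯ < i_m = l` with `m ≥ 1` (a chain is identified with the set `T` of
its intermediate indices, and `m = T.card + 1`). -/
def chainB {R : Type*} [CommRing R] {S : ℕ} (a : Fin S → Fin S → R) (i l : Fin S) : R :=
  ∑ T ∈ (Finset.univ.filter (fun j => i < j ∧ j < l)).powerset,
    (-1) ^ (T.card + 1) * pathProdR a (i :: (T.sort (· ≤ ·) ++ [l]))

open Finset Module

section

variable {R M : Type*} [CommRing R] [AddCommGroup M] [Module R M] {S : ℕ}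

def chainSum (a : Fin S → Fin S → R) (j : Fin S) (s : Finset (Fin S)) (l : Fin S) : R :=
  ∑ T ∈ s.powerset, (-1) ^ (T.card + 1) * pathProdR a (j :: (T.sort (· ≤ ·) ++ [l]))

theorem chainB_eq_chainSum (a : Fin S → Fin S → R) (i l : Fin S) :
    chainB a i l = chainSum a i (Ioo i l) l := by
  have h : univ.filter (fun j => i < j ∧ j < l) = Ioo i l := by ext; simp
  rw [chainB, chainSum, h]

theorem chainSum_empty (a : Fin S → Fin S → R) (j l : Fin S) :
    chainSum a j ∅ l = -a j l := by
  simp [chainSum, pathProdR]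

theorem sum_powerset_insert_min (a : Fin S → Fin S → R) (j m l : Fin S) {s : Finset (Fin S)}
    (hm : ∀ x ∈ s, m < x) :
    ∑ T ∈ s.powerset, (-1) ^ ((insert m T).card + 1) *
        pathProdR a (j :: ((insert m T).sort (· ≤ ·) ++ [l]))
      = -(a j m * chainSum a m s l) := by
  rw [chainSum, mul_sum, ← sum_neg_distrib]
  refine sum_congr rfl fun T hT => ?_
  have hmT : m ∉ T := fun h => lt_irrefl m (hm m (mem_powerset.1 hT h))
  rw [sort_insert _ (fun x hx => (hm x (mem_powerset.1 hT hx)).le) hmT,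
    card_insert_of_notMem hmT, List.cons_append, pathProdR]
  ring

/-- Splitting a chain after its first step: the next index `x` is the least element of `T`. -/
theorem chainSum_eq (a : Fin S → Fin S → R) (j l : Fin S) (s : Finset (Fin S)) :
    chainSum a j s l = -a j l - ∑ x ∈ s, a j x * chainSum a x (s.filter (x < ·)) l := by
  induction s using Finset.induction_on_min with
  | empty => simp [chainSum_empty]
  | insert m s hm ih =>
    have hms : m ∉ s := fun h => lt_irrefl m (hm m h)
    have filter_min : (insert m s).filter (m < ·) = s := by
      rw [filter_insert, if_neg (lt_irrefl m), filter_true_of_mem hm]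
    have filter_of_mem : ∀ x ∈ s, (insert m s).filter (x < ·) = s.filter (x < ·) := fun x hx => by
      rw [filter_insert, if_neg (hm x hx).not_gt]
    rw [chainSum, sum_powerset_insert hms, ← chainSum, sum_powerset_insert_min a j m l hm,
      sum_insert hms, filter_min, sum_congr rfl fun x hx => by rw [filter_of_mem x hx], ih]
    ring

theorem chainB_eq (a : Fin S → Fin S → R) (i l : Fin S) :
    chainB a i l = -a i l - ∑ x ∈ Ioo i l, a i x * chainB a x l := by
  have filter_Ioo : ∀ x ∈ Ioo i l, (Ioo i l).filter (x < ·) = Ioo x l := fun x hx => by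
    ext y
    simp only [mem_filter, mem_Ioo] at hx ⊢
    exact ⟨fun h => ⟨h.2, h.1.2⟩, fun h => ⟨⟨hx.1.trans h.1, h.2⟩, h.1⟩⟩
  rw [chainB_eq_chainSum, chainSum_eq,
    sum_congr rfl fun x hx => by rw [filter_Ioo x hx, ← chainB_eq_chainSum]]

theorem preReflection_chain_step (ν : Fin S → M) (φ : Fin S → M →ₗ[R] R) {k l : Fin S}
    (hkl : k < l) :
    preReflection (ν k) (φ k) (ν l + ∑ i ∈ Ioo k l, chainB (fun k l => φ k (ν l)) i l • ν i)
      = ν l + ∑ i ∈ Ico k l, chainB (fun k l => φ k (ν l)) i l • ν i := by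
  rw [preReflection_apply, ← Ioo_insert_left hkl, sum_insert left_notMem_Ioo, chainB_eq _ k l]
  simp only [map_add, map_sum, map_smul, smul_eq_mul, mul_comm (chainB _ _ l)]
  module

theorem foldr_drop_preReflection_apply (ν : Fin S → M) (φ : Fin S → M →ₗ[R] R) {k l : Fin S}
    (hkl : k ≤ l) :
    ((List.ofFn fun j : Fin l => ⇑(preReflection (ν (Fin.castLE l.is_lt.le j))
        (φ (Fin.castLE l.is_lt.le j)))).drop k).foldr (· ∘ ·) id (ν l)
      = ν l + ∑ i ∈ Ico k l, chainB (fun k l => φ k (ν l)) i l • ν i := by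
  obtain ⟨d, hd⟩ : ∃ d, k.val + d = l.val := ⟨l - k, by omega⟩
  induction d generalizing k with
  | zero =>
    obtain rfl : k = l := Fin.ext (by omega)
    rw [List.drop_eq_nil_of_le (by simp), Ico_self, sum_empty, add_zero]
    rfl
  | succ d ih =>
    have hkl' : k < l := Fin.lt_def.2 (by omega)
    let k' : Fin S := ⟨k + 1, by omega⟩
    have hk'l : k' ≤ l := Fin.le_def.2 (by simp [k']; omega)
    have hIco : Ico k' l = Ioo k l := by
      ext i; simp only [mem_Ico, mem_Ioo, Fin.le_def, Fin.lt_def, k']; omega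
    rw [List.drop_eq_getElem_cons (by simpa using hkl'), List.foldr_cons, List.getElem_ofFn,
      Function.comp_apply, ih hk'l (by simp [k']; omega), hIco]
    exact preReflection_chain_step ν φ hkl'

theorem foldr_preReflection_apply (ν : Fin S → M) (φ : Fin S → M →ₗ[R] R) (l : Fin S) :
    (List.ofFn fun j : Fin l => ⇑(preReflection (ν (Fin.castLE l.is_lt.le j))
        (φ (Fin.castLE l.is_lt.le j)))).foldr (· ∘ ·) id (ν l)
      = ν l + ∑ i ∈ Iio l, chainB (fun k l => φ k (ν l)) i l • ν i := by
  have hIco : Ico ⟨0, l.pos⟩ l = Iio l := by ext i; simp [Fin.le_def]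
  simpa [hIco] using
    foldr_drop_preReflection_apply ν φ (k := ⟨0, l.pos⟩) (Fin.le_def.2 l.val.zero_le)

end

/-- Let `ν_1, …, ν_S ∈ M` and `φ_1, …, φ_S : M → R` be linear with `φ_k(ν_k) = 2`,
and let `s_k(x) = x − φ_k(x)ν_k` be the corresponding reflections and
`a_{k,l} = φ_k(ν_l)` the Cartan numbers.  Then for `S ≥ 2`,
`s_1 ∘ s_2 ∘ ⋯ ∘ s_{S−1}(ν_S) = ν_S + Σ_{i=1}^{S−1} b_i ν_i`, where
`b_i = Σ (−1)^m a_{i_0,i_1}⋯a_{i_{m−1},i_m}` summed over chains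
`i = i_0 < i_1 < ⋯ < i_m = S`, `m ≥ 1`. -/
theorem reflection_chain_formula {R M : Type*} [CommRing R] [AddCommGroup M]
    [Module R M] (S : ℕ) (hS : 2 ≤ S) (ν : Fin S → M) (φ : Fin S → (M →ₗ[R] R)) :
    ((List.ofFn (fun k : Fin (S - 1) =>
          (fun x => x - φ (Fin.castLE (Nat.sub_le S 1) k) x •
              ν (Fin.castLE (Nat.sub_le S 1) k) : M → M))).foldr (· ∘ ·) id)
        (ν ⟨S - 1, by omega⟩)
      = ν ⟨S - 1, by omega⟩
        + ∑ i ∈ Finset.univ.filter (fun i => i < (⟨S - 1, by omega⟩ : Fin S)),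
            chainB (fun k l => φ k (ν l)) i ⟨S - 1, by omega⟩ • ν i := by
  simp_rw [← preReflection_apply, filter_gt_eq_Iio]
  exact foldr_preReflection_apply ν φ ⟨S - 1, by omega⟩
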